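/- arXiv:2201.09087 — 2 statements merged into one kernel-verified Lean document; each statement's English description precedes it below -/
import Mathlib

section
/- Let (A, d) be a diffuse metric space, i.e., d : A → A → ℝ satisfies 0 ≤ d(x,y) ≤ 1, d(x,y) = d(y,x), and d(x,z) ≤ d(x,y) + d(y,z) for all x, y, z ∈ A. Then the Łukaszyk–Karmowski distance LK d on finitely supported probability distributions on A is again a diffuse metric: for all finitely supported distributions μ, ν, ρ on A one has 0 ≤ LK d(μ,ν) ≤ 1, LK d(μ,ν) = LK d(ν,μ), and LK d(μ,ρ) ≤ LK d(μ,ν) + LK d(ν,ρ). -/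
/-- The Łukaszyk–Karmowski distance between finitely supported (real-valued)
functions `μ ν : A →₀ ℝ`, relative to a fuzzy relation `d : A → A → ℝ`. -/
noncomputable def LK {A : Type*} (d : A → A → ℝ) (μ ν : A →₀ ℝ) : ℝ :=
  ∑ x ∈ μ.support, ∑ y ∈ ν.support, μ x * ν y * d x y

/-- A finitely supported probability distribution: pointwise nonnegative and
summing to 1. -/
def IsDist {A : Type*} (μ : A →₀ ℝ) : Prop :=
  (∀ x, 0 ≤ μ x) ∧ ∑ x ∈ μ.support, μ x = 1

/-!
Averaging the triangle inequality over an intermediate point `y ∼ ν` gives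
`d x z ≤ f x + g z` with `f x = 𝔼_{y∼ν} d x y` and `g z = 𝔼_{y∼ν} d y z`.
Since `LK` is monotone in `d` for nonnegative weights, and a kernel of the separated
form `f x + g z` integrates against `μ ⊗ ρ` to `𝔼_μ f + 𝔼_ρ g = LK d μ ν + LK d ν ρ`,
the triangle inequality for `LK d` follows.
-/

open Finset

section LK

variable {A : Type*}

theorem LK_eq_sum_mul_sum (d : A → A → ℝ) (μ ν : A →₀ ℝ) :
    LK d μ ν = ∑ x ∈ μ.support, μ x * ∑ y ∈ ν.support, ν y * d x y := by
  simp only [LK, mul_sum, mul_assoc]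

theorem LK_flip (d : A → A → ℝ) (μ ν : A →₀ ℝ) : LK (flip d) ν μ = LK d μ ν := by
  rw [LK, LK, sum_comm]
  simp only [flip, mul_comm (ν _)]

theorem LK_comm {d : A → A → ℝ} (hd : ∀ x y, d x y = d y x) (μ ν : A →₀ ℝ) :
    LK d μ ν = LK d ν μ := by
  rw [← LK_flip]
  congr 1
  funext x y
  exact hd y x

theorem LK_nonneg {d : A → A → ℝ} {μ ν : A →₀ ℝ} (hμ : ∀ x, 0 ≤ μ x) (hν : ∀ y, 0 ≤ ν y)
    (hd : ∀ x y, 0 ≤ d x y) : 0 ≤ LK d μ ν :=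
  sum_nonneg fun x _ => sum_nonneg fun y _ => mul_nonneg (mul_nonneg (hμ x) (hν y)) (hd x y)

theorem LK_mono {d d' : A → A → ℝ} {μ ν : A →₀ ℝ} (hμ : ∀ x, 0 ≤ μ x) (hν : ∀ y, 0 ≤ ν y)
    (h : ∀ x y, d x y ≤ d' x y) : LK d μ ν ≤ LK d' μ ν :=
  sum_le_sum fun x _ => sum_le_sum fun y _ =>
    mul_le_mul_of_nonneg_left (h x y) (mul_nonneg (hμ x) (hν y))

theorem LK_const (c : ℝ) (μ ν : A →₀ ℝ) :
    LK (fun _ _ => c) μ ν = (∑ x ∈ μ.support, μ x) * (∑ y ∈ ν.support, ν y) * c := by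
  simp only [LK, ← sum_mul, sum_mul_sum]

theorem LK_add_left_right (f g : A → ℝ) (μ ν : A →₀ ℝ) :
    LK (fun x y => f x + g y) μ ν =
      (∑ x ∈ μ.support, μ x * f x) * (∑ y ∈ ν.support, ν y) +
        (∑ x ∈ μ.support, μ x) * ∑ y ∈ ν.support, ν y * g y := by
  simp only [LK, mul_add, sum_add_distrib, sum_mul_sum]
  congr 1 <;> exact sum_congr rfl fun _ _ => sum_congr rfl fun _ _ => by ring

theorem LK_le_one {d : A → A → ℝ} (hd : ∀ x y, d x y ≤ 1) {μ ν : A →₀ ℝ}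
    (hμ : IsDist μ) (hν : IsDist ν) : LK d μ ν ≤ 1 :=
  calc LK d μ ν ≤ LK (fun _ _ => 1) μ ν := LK_mono hμ.1 hν.1 hd
    _ = 1 := by rw [LK_const, hμ.2, hν.2, mul_one, mul_one]

theorem le_sum_mul_add_sum_mul_of_triangle {d : A → A → ℝ}
    (htri : ∀ x y z, d x z ≤ d x y + d y z) {ν : A →₀ ℝ} (hν : IsDist ν) (x z : A) :
    d x z ≤ ∑ y ∈ ν.support, ν y * d x y + ∑ y ∈ ν.support, ν y * d y z :=
  calc d x z = ∑ y ∈ ν.support, ν y * d x z := by rw [← sum_mul, hν.2, one_mul]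
    _ ≤ ∑ y ∈ ν.support, ν y * (d x y + d y z) :=
      sum_le_sum fun y _ => mul_le_mul_of_nonneg_left (htri x y z) (hν.1 y)
    _ = _ := by simp only [mul_add, sum_add_distrib]

theorem LK_triangle {d : A → A → ℝ} (htri : ∀ x y z, d x z ≤ d x y + d y z)
    {μ ν ρ : A →₀ ℝ} (hμ : IsDist μ) (hν : IsDist ν) (hρ : IsDist ρ) :
    LK d μ ρ ≤ LK d μ ν + LK d ν ρ :=
  calc LK d μ ρ ≤ LK (fun x z => ∑ y ∈ ν.support, ν y * d x y +
        ∑ y ∈ ν.support, ν y * d y z) μ ρ :=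
      LK_mono hμ.1 hρ.1 (le_sum_mul_add_sum_mul_of_triangle htri hν)
    _ = LK d μ ν + LK (flip d) ρ ν := by
      rw [LK_add_left_right, hμ.2, hρ.2, mul_one, one_mul, LK_eq_sum_mul_sum,
        LK_eq_sum_mul_sum]
      rfl
    _ = LK d μ ν + LK d ν ρ := by rw [LK_flip]

end LK

/-- If `(A, d)` is a diffuse metric space (bounded by 1, symmetric, triangle
inequality), then `LK d` is again a diffuse metric on finitely supported
probability distributions. -/
theorem lk_diffuse_metric {A : Type*} (d : A → A → ℝ)
    (hbd : ∀ x y, 0 ≤ d x y ∧ d x y ≤ 1)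
    (hsymm : ∀ x y, d x y = d y x)
    (htri : ∀ x y z, d x z ≤ d x y + d y z)
    (μ ν ρ : A →₀ ℝ) (hμ : IsDist μ) (hν : IsDist ν) (hρ : IsDist ρ) :
    (0 ≤ LK d μ ν ∧ LK d μ ν ≤ 1) ∧
      LK d μ ν = LK d ν μ ∧
      LK d μ ρ ≤ LK d μ ν + LK d ν ρ :=
  ⟨⟨LK_nonneg hμ.1 hν.1 fun x y => (hbd x y).1, LK_le_one (fun x y => (hbd x y).2) hμ hν⟩,
    LK_comm hsymm μ ν, LK_triangle htri hμ hν hρ⟩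
end

section
/- There exists a diffuse metric space (A, d) for which the convex combination operation +_{1/2} on finitely supported probability distributions fails to be nonexpansive with respect to the sup-product of the Łukaszyk–Karmowski distance. Concretely, take A = {a, b} (a two-element type) with d(a,a) = d(b,b) = 1/2 and d(a,b) = d(b,a) = 1 (this d is a diffuse metric). Then with μ = (1/2)·δ_a + (1/2)·δ_b one has LK d(μ, μ) = 3/4, while max{ LK d(δ_a, δ_a), LK d(δ_b, δ_b) } = 1/2, so LK d(μ, μ) > max{ LK d(δ_a, δ_a), LK d(δ_b, δ_b) }. -/
/-- The Dirac distribution at `a`. -/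
noncomputable def dirac {A : Type*} (a : A) : A →₀ ℝ := Finsupp.single a 1

/-!
The ŁK distance is bilinear in the two distributions, so `LK d μ μ` for
`μ = ½δ_a + ½δ_b` is the average of the four values of `d`, namely
`(½ + 1 + 1 + ½) / 4 = 3/4`, whereas `LK d δ_x δ_x = d x x = ½`.
-/

def IsDiffuseMetric {A : Type*} (d : A → A → ℝ) : Prop :=
  (∀ x y, 0 ≤ d x y ∧ d x y ≤ 1) ∧ (∀ x y, d x y = d y x) ∧ ∀ x y z, d x z ≤ d x y + d y z

lemma isDiffuseMetric_of_mem_Icc {A : Type*} {d : A → A → ℝ} (symm : ∀ x y, d x y = d y x)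
    (mem : ∀ x y, d x y ∈ Set.Icc (1 / 2) 1) : IsDiffuseMetric d := by
  refine ⟨fun x y => ⟨by linarith [(mem x y).1], (mem x y).2⟩, symm, fun x y z => ?_⟩
  linarith [(mem x z).2, (mem x y).1, (mem y z).1]

lemma isDiffuseMetric_ite {A : Type*} [DecidableEq A] :
    IsDiffuseMetric fun x y : A => if x = y then (1 / 2 : ℝ) else 1 := by
  refine isDiffuseMetric_of_mem_Icc (fun x y => by simp only [eq_comm]) fun x y => ?_
  split_ifs <;> norm_num

namespace LK

variable {A : Type*} (d : A → A → ℝ)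

lemma eq_sum_of_support_subset {μ ν : A →₀ ℝ} {s t : Finset A} (hs : μ.support ⊆ s)
    (ht : ν.support ⊆ t) : LK d μ ν = ∑ x ∈ s, ∑ y ∈ t, μ x * ν y * d x y := by
  rw [LK, Finset.sum_subset hs fun x _ hx => by simp [Finsupp.notMem_support_iff.mp hx]]
  exact Finset.sum_congr rfl fun x _ =>
    Finset.sum_subset ht fun y _ hy => by simp [Finsupp.notMem_support_iff.mp hy]

lemma add_left (μ μ' ν : A →₀ ℝ) : LK d (μ + μ') ν = LK d μ ν + LK d μ' ν := by
  classical
  have hμ : μ.support ⊆ μ.support ∪ μ'.support := Finset.subset_union_left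
  have hμ' : μ'.support ⊆ μ.support ∪ μ'.support := Finset.subset_union_right
  rw [eq_sum_of_support_subset d Finsupp.support_add subset_rfl,
    eq_sum_of_support_subset d hμ subset_rfl, eq_sum_of_support_subset d hμ' subset_rfl,
    ← Finset.sum_add_distrib]
  simp only [Finsupp.add_apply, add_mul, Finset.sum_add_distrib]

lemma add_right (μ ν ν' : A →₀ ℝ) : LK d μ (ν + ν') = LK d μ ν + LK d μ ν' := by
  classical
  have hν : ν.support ⊆ ν.support ∪ ν'.support := Finset.subset_union_left
  have hν' : ν'.support ⊆ ν.support ∪ ν'.support := Finset.subset_union_right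
  rw [eq_sum_of_support_subset d subset_rfl Finsupp.support_add,
    eq_sum_of_support_subset d subset_rfl hν, eq_sum_of_support_subset d subset_rfl hν',
    ← Finset.sum_add_distrib]
  simp only [Finsupp.add_apply, mul_add, add_mul, Finset.sum_add_distrib]

lemma smul_left (r : ℝ) (μ ν : A →₀ ℝ) : LK d (r • μ) ν = r * LK d μ ν := by
  rw [eq_sum_of_support_subset d Finsupp.support_smul subset_rfl, LK, Finset.mul_sum]
  simp only [Finsupp.smul_apply, smul_eq_mul, Finset.mul_sum, mul_assoc]

lemma smul_right (r : ℝ) (μ ν : A →₀ ℝ) : LK d μ (r • ν) = r * LK d μ ν := by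
  rw [eq_sum_of_support_subset d subset_rfl Finsupp.support_smul, LK, Finset.mul_sum]
  simp only [Finsupp.smul_apply, smul_eq_mul, Finset.mul_sum]
  exact Finset.sum_congr rfl fun _ _ => Finset.sum_congr rfl fun _ _ => by ring

lemma dirac_dirac (a b : A) : LK d (dirac a) (dirac b) = d a b := by
  classical
  rw [dirac, dirac,
    eq_sum_of_support_subset d Finsupp.support_single_subset Finsupp.support_single_subset]
  simp

end LK

/-- On the two-element space with `d(x,x) = 1/2` and `d(x,y) = 1` for `x ≠ y`
(a diffuse metric), the convex combination `+_{1/2}` fails to be nonexpansive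
for the sup-product of the ŁK distance. -/
theorem lk_convex_comb_not_nonexpansive :
    let d : Bool → Bool → ℝ := fun x y => if x = y then 1 / 2 else 1
    let μ : Bool →₀ ℝ := (1 / 2 : ℝ) • dirac true + (1 / 2 : ℝ) • dirac false
    (∀ x y, 0 ≤ d x y ∧ d x y ≤ 1) ∧
    (∀ x y, d x y = d y x) ∧
    (∀ x y z, d x z ≤ d x y + d y z) ∧
    LK d μ μ = 3 / 4 ∧
    max (LK d (dirac true) (dirac true)) (LK d (dirac false) (dirac false))
      = 1 / 2 ∧
    LK d μ μ >
      max (LK d (dirac true) (dirac true))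
        (LK d (dirac false) (dirac false)) := by
  intro d μ
  obtain ⟨bounded, symm, triangle⟩ : IsDiffuseMetric d := isDiffuseMetric_ite
  have mixture : LK d μ μ = 3 / 4 := by
    simp only [μ, LK.add_left, LK.add_right, LK.smul_left, LK.smul_right, LK.dirac_dirac, d]
    norm_num
  have diagonal : max (LK d (dirac true) (dirac true)) (LK d (dirac false) (dirac false))
      = 1 / 2 := by
    simp [LK.dirac_dirac, d]
  exact ⟨bounded, symm, triangle, mixture, diagonal, by rw [mixture, diagonal]; norm_num⟩
end
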